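/- Let Φ ∈ C¹_♯(Y_d)^d vanish nowhere. Then the set {ρ ∈ C¹_♯(Y_d) : ρ > 0 everywhere and the rotation set C_{ρΦ} is a singleton} is closed in {ρ ∈ C¹_♯(Y_d) : ρ > 0 everywhere} for the topology of uniform convergence on ℝ^d: if (ρ_n) is a sequence of everywhere positive functions in C¹_♯(Y_d) with C_{ρ_nΦ} a singleton for each n, and (ρ_n) converges uniformly to an everywhere positive ρ ∈ C¹_♯(Y_d), then C_{ρΦ} is a singleton. -/

import Mathlib

open MeasureTheory Filter Matrix

noncomputable section

/-- A function on `ℝ^d` is `ℤ^d`-periodic. -/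
def ZdPeriodic {d : ℕ} {E : Type*} (f : (Fin d → ℝ) → E) : Prop :=
  ∀ (κ : Fin d → ℤ) (x : Fin d → ℝ), f (x + fun i => (κ i : ℝ)) = f x

/-- The unit cube `[0,1)^d`, a fundamental domain for the torus `Y_d = ℝ^d/ℤ^d`. -/
def unitCube (d : ℕ) : Set (Fin d → ℝ) := {x | ∀ i, x i ∈ Set.Ico (0 : ℝ) 1}

/-- `X` is the global flow of the vector field `b`: `∂X/∂t(t,x) = b(X(t,x))`, `X(0,x) = x`. -/
def IsFlowOf {d : ℕ} (b : (Fin d → ℝ) → (Fin d → ℝ))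
    (X : ℝ → (Fin d → ℝ) → (Fin d → ℝ)) : Prop :=
  ∀ x : Fin d → ℝ, X 0 x = x ∧ ∀ t : ℝ, HasDerivAt (fun s => X s x) (b (X t x)) t

/-- A measure `μ` on the torus `Y_d` (identified with a measure on `ℝ^d` carried by the unit
cube) is invariant for the flow `X`: `∫ ψ(X(t,y)) dμ = ∫ ψ dμ` for all `t` and all continuous
`ℤ^d`-periodic `ψ`. -/
def FlowInvariant {d : ℕ} (X : ℝ → (Fin d → ℝ) → (Fin d → ℝ))
    (μ : Measure (Fin d → ℝ)) : Prop :=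
  ∀ (t : ℝ) (ψ : (Fin d → ℝ) → ℝ), Continuous ψ → ZdPeriodic ψ →
    ∫ y, ψ (X t y) ∂μ = ∫ y, ψ y ∂μ

/-- Herman's rotation set `C_b = {∫ b dμ : μ invariant probability measure for the flow}`. -/
def rotationSet {d : ℕ} (b : (Fin d → ℝ) → (Fin d → ℝ))
    (X : ℝ → (Fin d → ℝ) → (Fin d → ℝ)) : Set (Fin d → ℝ) :=
  {ζ | ∃ μ : Measure (Fin d → ℝ), IsProbabilityMeasure μ ∧ μ (unitCube d)ᶜ = 0 ∧
        FlowInvariant X μ ∧ ζ = ∫ y, b y ∂μ}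

/-- The gradient of a scalar function on `ℝ^d`. -/
def grad {d : ℕ} (ψ : (Fin d → ℝ) → ℝ) (y : Fin d → ℝ) : Fin d → ℝ :=
  fun i => fderiv ℝ ψ y (Pi.single i 1)

/-!
The fields `ρₙ Φ` and `ρ Φ` are parallel, so their flows are time changes of one another:
reweighting an invariant measure `ν` of the flow of `ρₐ Φ` by `ρₐ / ρ_b` gives an invariant
measure of the flow of `ρ_b Φ`, whose rotation vector is `(∫ ρₐ / ρ_b dν)⁻¹ ∫ ρₐ Φ dν`.
Starting from any invariant `μ` of the flow of `ρ Φ`, the unique rotation vector of `ρₙ Φ` is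
therefore `(∫ ρ / ρₙ dμ)⁻¹ ∫ ρ Φ dμ`, which tends to `∫ ρ Φ dμ`; so this integral does not
depend on `μ`, and starting from `ρ₀ Φ` shows that the rotation set of `ρ Φ` is nonempty.
-/

open Set Topology
open scoped NNReal

namespace ZdPeriodic

variable {d : ℕ} {E F G : Type*}

theorem apply_fract {f : (Fin d → ℝ) → E} (hf : ZdPeriodic f) (x : Fin d → ℝ) :
    f (fun i => Int.fract (x i)) = f x := by
  have hx : ((fun i => Int.fract (x i)) + fun i => (⌊x i⌋ : ℝ)) = x :=
    funext fun i => Int.fract_add_floor (x i)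
  rw [← hf (fun i => ⌊x i⌋), hx]

theorem range_eq_image_Icc {f : (Fin d → ℝ) → E} (hf : ZdPeriodic f) :
    range f = f '' Icc 0 1 := by
  refine (image_subset_range f _).antisymm' ?_
  rintro _ ⟨x, rfl⟩
  exact ⟨_, ⟨fun i => Int.fract_nonneg (x i), fun i => (Int.fract_lt_one (x i)).le⟩,
    hf.apply_fract x⟩

theorem isCompact_range [TopologicalSpace E] {f : (Fin d → ℝ) → E} (hf : ZdPeriodic f)
    (hc : Continuous f) : IsCompact (range f) :=
  hf.range_eq_image_Icc ▸ isCompact_Icc.image hc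

theorem exists_norm_le [SeminormedAddCommGroup E] {f : (Fin d → ℝ) → E} (hf : ZdPeriodic f)
    (hc : Continuous f) : ∃ C, ∀ x, ‖f x‖ ≤ C :=
  let ⟨C, hC⟩ := (hf.isCompact_range hc).isBounded.exists_norm_le
  ⟨C, fun x => hC _ (mem_range_self x)⟩

theorem exists_pos_le {f : (Fin d → ℝ) → ℝ} (hf : ZdPeriodic f) (hc : Continuous f)
    (hpos : ∀ x, 0 < f x) : ∃ c, 0 < c ∧ ∀ x, c ≤ f x := by
  obtain ⟨_, ⟨x₀, rfl⟩, hmin⟩ := (hf.isCompact_range hc).exists_isLeast (range_nonempty f)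
  exact ⟨f x₀, hpos x₀, fun x => hmin (mem_range_self x)⟩

theorem integrable [NormedAddCommGroup E] {f : (Fin d → ℝ) → E} (hf : ZdPeriodic f)
    (hc : Continuous f) (μ : Measure (Fin d → ℝ)) [IsFiniteMeasure μ] : Integrable f μ :=
  let ⟨C, hC⟩ := hf.exists_norm_le hc
  .of_bound hc.aestronglyMeasurable C (ae_of_all _ hC)

theorem comp₂ {f : (Fin d → ℝ) → E} {g : (Fin d → ℝ) → F} (op : E → F → G)
    (hf : ZdPeriodic f) (hg : ZdPeriodic g) : ZdPeriodic fun x => op (f x) (g x) :=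
  fun κ x => by simp only [hf κ x, hg κ x]

theorem exists_lipschitzWith [NormedAddCommGroup E] [NormedSpace ℝ E] {f : (Fin d → ℝ) → E}
    (hf : ZdPeriodic f) (hc : ContDiff ℝ 1 f) : ∃ K, LipschitzWith K f := by
  have hper : ZdPeriodic (fderiv ℝ f) := fun κ x => by
    rw [← fderiv_comp_add_right, funext (hf κ)]
  obtain ⟨C, hC⟩ := hper.exists_norm_le (hc.continuous_fderiv one_ne_zero)
  refine ⟨C.toNNReal, lipschitzWith_of_nnnorm_fderiv_le (hc.differentiable one_ne_zero) fun x => ?_⟩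
  rw [← NNReal.coe_le_coe, coe_nnnorm, Real.coe_toNNReal']
  exact (hC x).trans (le_max_left _ _)

end ZdPeriodic

theorem norm_intervalIntegral_comp_add_sub_le {E : Type*} [NormedAddCommGroup E]
    [NormedSpace ℝ E] {g : ℝ → E} (hg : Continuous g) {M : ℝ} (hM : ∀ x, ‖g x‖ ≤ M)
    (t a b : ℝ) : ‖∫ x in a..b, (g (t + x) - g x)‖ ≤ 2 * M * |t| := by
  have hi : ∀ a b, IntervalIntegrable g volume a b := fun _ _ => hg.intervalIntegrable _ _
  have hgt : Continuous fun x => g (t + x) := hg.comp (continuous_const_add t)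
  rw [intervalIntegral.integral_sub (hgt.intervalIntegrable a b) (hi a b),
    intervalIntegral.integral_comp_add_left g t,
    intervalIntegral.integral_interval_sub_interval_comm (hi _ _) (hi _ _) (hi _ _)]
  calc ‖(∫ x in t + a..a, g x) - ∫ x in t + b..b, g x‖
      ≤ M * |a - (t + a)| + M * |b - (t + b)| :=
        (norm_sub_le _ _).trans (add_le_add
          (intervalIntegral.norm_integral_le_of_norm_le_const fun x _ => hM x)
          (intervalIntegral.norm_integral_le_of_norm_le_const fun x _ => hM x))
    _ = 2 * M * |t| := by
        rw [sub_add_cancel_right, sub_add_cancel_right, abs_neg]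
        ring

theorem nonpos_of_forall_pos_mul_le {a C : ℝ} (h : ∀ S, 0 < S → S * a ≤ C) : a ≤ 0 := by
  by_contra! ha
  have := h ((|C| + 1) / a) (by positivity)
  rw [div_mul_cancel₀ _ ha.ne'] at this
  linarith [le_abs_self C]

namespace IsFlowOf

variable {d : ℕ} {b : (Fin d → ℝ) → (Fin d → ℝ)} {X Y : ℝ → (Fin d → ℝ) → (Fin d → ℝ)}
  {K : ℝ≥0} {w : (Fin d → ℝ) → ℝ}

theorem apply_zero (hX : IsFlowOf b X) (x : Fin d → ℝ) : X 0 x = x := (hX x).1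

theorem hasDerivAt (hX : IsFlowOf b X) (x : Fin d → ℝ) (t : ℝ) :
    HasDerivAt (fun s => X s x) (b (X t x)) t :=
  (hX x).2 t

theorem continuous_time (hX : IsFlowOf b X) (x : Fin d → ℝ) : Continuous fun t => X t x :=
  continuous_iff_continuousAt.2 fun t => (hX.hasDerivAt x t).continuousAt

theorem eq_of_hasDerivAt (hb : LipschitzWith K b) (hX : IsFlowOf b X) {g : ℝ → Fin d → ℝ}
    (hg : ∀ t, HasDerivAt g (b (g t)) t) (t : ℝ) : g t = X t (g 0) :=
  congrFun (ODE_solution_unique_univ (v := fun _ => b) (s := fun _ => univ) (t₀ := 0)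
    (fun _ => hb.lipschitzOnWith) (fun t => ⟨hg t, trivial⟩)
    (fun t => ⟨hX.hasDerivAt _ t, trivial⟩) (hX.apply_zero _).symm) t

theorem add_apply (hb : LipschitzWith K b) (hX : IsFlowOf b X) (s t : ℝ) (x : Fin d → ℝ) :
    X (s + t) x = X s (X t x) := by
  simpa using hX.eq_of_hasDerivAt hb (g := fun s => X (s + t) x)
    (fun s => (hX.hasDerivAt x (s + t)).comp_add_const s t) s

theorem apply_add_intCast (hb : LipschitzWith K b) (hX : IsFlowOf b X) (hbp : ZdPeriodic b)
    (t : ℝ) (κ : Fin d → ℤ) (x : Fin d → ℝ) :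
    X t (x + fun i => (κ i : ℝ)) = X t x + fun i => (κ i : ℝ) := by
  have hg : ∀ s, HasDerivAt (fun s => X s x + fun i => (κ i : ℝ))
      (b (X s x + fun i => (κ i : ℝ))) s := fun s => by
    rw [hbp]
    exact (hX.hasDerivAt x s).add_const _
  simpa [hX.apply_zero] using (hX.eq_of_hasDerivAt hb hg t).symm

theorem comp_zdPeriodic (hb : LipschitzWith K b) (hX : IsFlowOf b X) (hbp : ZdPeriodic b)
    {ψ : (Fin d → ℝ) → ℝ} (hψ : ZdPeriodic ψ) (t : ℝ) : ZdPeriodic fun x => ψ (X t x) :=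
  fun κ x => by simp only [hX.apply_add_intCast hb hbp, hψ κ]

theorem neg (hX : IsFlowOf b X) : IsFlowOf (-b) fun t => X (-t) := fun x =>
  ⟨by simpa using hX.apply_zero x, fun t => by
    simpa [Function.comp_def] using (hX.hasDerivAt x (-t)).scomp t (hasDerivAt_neg t)⟩

theorem dist_le (hb : LipschitzWith K b) (hX : IsFlowOf b X) {t : ℝ} (ht : 0 ≤ t)
    (x y : Fin d → ℝ) : dist (X t x) (X t y) ≤ dist x y * Real.exp (K * t) := by
  simpa [hX.apply_zero] using dist_le_of_trajectories_ODE (v := fun _ => b) (fun _ => hb)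
    (hX.continuous_time x).continuousOn (fun s _ => (hX.hasDerivAt x s).hasDerivWithinAt)
    (hX.continuous_time y).continuousOn (fun s _ => (hX.hasDerivAt y s).hasDerivWithinAt)
    le_rfl t ⟨ht, le_rfl⟩

theorem continuous_apply (hb : LipschitzWith K b) (hX : IsFlowOf b X) (t : ℝ) :
    Continuous (X t) := by
  have forward : ∀ {b : (Fin d → ℝ) → Fin d → ℝ} {X : ℝ → (Fin d → ℝ) → Fin d → ℝ},
      LipschitzWith K b → IsFlowOf b X → ∀ t, 0 ≤ t → Continuous (X t) :=
    fun hb hX t ht => (LipschitzWith.of_dist_le_mul (K := (Real.exp (K * t)).toNNReal)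
      fun x y => by
        rw [Real.coe_toNNReal _ (Real.exp_pos _).le, mul_comm]
        exact hX.dist_le hb ht x y).continuous
  rcases le_total 0 t with ht | ht
  · exact forward hb hX t ht
  · simpa using forward hb.neg hX.neg (-t) (neg_nonneg.2 ht)

theorem lipschitzWith_time (hX : IsFlowOf b X) {L : ℝ≥0} (hL : ∀ x, ‖b x‖₊ ≤ L)
    (x : Fin d → ℝ) : LipschitzWith L fun t => X t x :=
  lipschitzWith_of_nnnorm_deriv_le (fun t => (hX.hasDerivAt x t).differentiableAt) fun t => by
    rw [(hX.hasDerivAt x t).deriv]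
    exact hL _

theorem continuous_uncurry (hb : LipschitzWith K b) (hX : IsFlowOf b X)
    (hbb : Bornology.IsBounded (range b)) : Continuous fun p : ℝ × (Fin d → ℝ) => X p.1 p.2 := by
  obtain ⟨L, hL⟩ := hbb.exists_norm_le
  exact continuous_prod_of_continuous_lipschitzWith _ L.toNNReal (hX.continuous_apply hb)
    fun x => hX.lipschitzWith_time (fun y => by
      rw [← NNReal.coe_le_coe, coe_nnnorm, Real.coe_toNNReal']
      exact (hL _ (mem_range_self y)).trans (le_max_left _ _)) x

theorem hasDerivAt_integral (hY : IsFlowOf b Y) (hw : Continuous w) (x : Fin d → ℝ) (s : ℝ) :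
    HasDerivAt (fun s => ∫ r in 0..s, w (Y r x)) (w (Y s x)) s :=
  ((hw.comp (hY.continuous_time x)).integral_hasStrictDerivAt 0 s).hasDerivAt

theorem time_change (hb : LipschitzWith K b) (hX : IsFlowOf b X) (hw : Continuous w)
    (hwb : Bornology.IsBounded (range w)) (hY : IsFlowOf (fun x => w x • b x) Y) (s : ℝ)
    (x : Fin d → ℝ) : Y s x = X (∫ r in 0..s, w (Y r x)) x := by
  obtain ⟨C, hC⟩ := hwb.exists_norm_le
  have hv : ∀ s, LipschitzOnWith (C.toNNReal * K) (fun z => w (Y s x) • b z) univ := fun s =>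
    (((lipschitzWith_smul (w (Y s x))).comp hb).weaken (mul_le_mul_left (by
      rw [← NNReal.coe_le_coe, coe_nnnorm, Real.coe_toNNReal']
      exact (hC _ (mem_range_self _)).trans (le_max_left _ _)) K)).lipschitzOnWith
  refine congrFun (ODE_solution_unique_univ (v := fun s z => w (Y s x) • b z)
    (s := fun _ => univ) (t₀ := 0) hv (fun s => ⟨hY.hasDerivAt x s, trivial⟩)
    (fun s => ⟨(hX.hasDerivAt x _).scomp s (hY.hasDerivAt_integral hw x s), trivial⟩) ?_) s
  simp [hY.apply_zero, hX.apply_zero]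

theorem abs_intervalIntegral_sub_mul_le (hb : LipschitzWith K b) (hX : IsFlowOf b X)
    (hw : Continuous w) (hwb : Bornology.IsBounded (range w))
    (hY : IsFlowOf (fun x => w x • b x) Y) {ψ : (Fin d → ℝ) → ℝ} (hψ : Continuous ψ) {M : ℝ}
    (hM : ∀ x, ‖ψ x‖ ≤ M) (t S : ℝ) (x : Fin d → ℝ) :
    |∫ s in 0..S, (ψ (X t (Y s x)) - ψ (Y s x)) * w (Y s x)| ≤ 2 * M * |t| := by
  set T : ℝ → ℝ := fun s => ∫ r in 0..s, w (Y r x)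
  have hψX : Continuous fun τ => ψ (X τ x) := hψ.comp (hX.continuous_time x)
  have hT : ∀ s, (ψ (X t (Y s x)) - ψ (Y s x)) * w (Y s x)
      = ((fun τ => ψ (X (t + τ) x) - ψ (X τ x)) ∘ T) s * w (Y s x) := fun s => by
    simp only [Function.comp, T, ← hX.time_change hb hw hwb hY, hX.add_apply hb]
  have hψXt : Continuous fun τ => ψ (X (t + τ) x) - ψ (X τ x) :=
    (hψX.comp (continuous_const_add t)).sub hψX
  simp_rw [hT]
  rw [intervalIntegral.integral_comp_mul_deriv (fun s _ => hY.hasDerivAt_integral hw x s)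
    (hw.comp (hY.continuous_time x)).continuousOn hψXt]
  exact norm_intervalIntegral_comp_add_sub_le hψX (fun τ => hM _) t _ _

end IsFlowOf

namespace FlowInvariant

variable {d : ℕ} {b : (Fin d → ℝ) → (Fin d → ℝ)} {X Y : ℝ → (Fin d → ℝ) → (Fin d → ℝ)}
  {K : ℝ≥0} {w : (Fin d → ℝ) → ℝ} {ν : Measure (Fin d → ℝ)}

theorem integral_intervalIntegral (hYc : Continuous fun p : ℝ × (Fin d → ℝ) => Y p.1 p.2)
    [IsFiniteMeasure ν] (hν : FlowInvariant Y ν) {φ : (Fin d → ℝ) → ℝ} (hφ : Continuous φ)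
    (hφp : ZdPeriodic φ) {S : ℝ} (hS : 0 ≤ S) :
    ∫ x, (∫ s in 0..S, φ (Y s x)) ∂ν = S * ∫ x, φ x ∂ν := by
  obtain ⟨C, hC⟩ := hφp.exists_norm_le hφ
  have hint : Integrable (Function.uncurry fun x s => φ (Y s x))
      (ν.prod (volume.restrict (Ioc 0 S))) :=
    .of_bound (hφ.comp (hYc.comp continuous_swap)).aestronglyMeasurable C
      (ae_of_all _ fun _ => hC _)
  simp_rw [intervalIntegral.integral_of_le hS]
  rw [integral_integral_swap hint]
  simp_rw [hν _ φ hφ hφp]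
  rw [setIntegral_const, Real.volume_real_Ioc_of_le hS, sub_zero, smul_eq_mul]

/-- By invariance of `ν`, `S` times the defect `∫ (ψ ∘ X t - ψ) w dν` is the `ν`-average of its
integrals over `[0, S]` along orbits of `Y`; the time change turns each of these into a
difference of integrals of `ψ ∘ X` over two intervals of length `|t|`, so it is bounded
uniformly in `S`. -/
theorem integral_comp_mul_eq (hb : LipschitzWith K b) (hbp : ZdPeriodic b) (hX : IsFlowOf b X)
    (hw : Continuous w) (hwp : ZdPeriodic w) (hY : IsFlowOf (fun x => w x • b x) Y)
    (hYc : Continuous fun p : ℝ × (Fin d → ℝ) => Y p.1 p.2) [IsProbabilityMeasure ν]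
    (hν : FlowInvariant Y ν) {ψ : (Fin d → ℝ) → ℝ} (hψ : Continuous ψ) (hψp : ZdPeriodic ψ)
    (t : ℝ) : ∫ x, ψ (X t x) * w x ∂ν = ∫ x, ψ x * w x ∂ν := by
  have hψXp := hX.comp_zdPeriodic hb hbp hψp t
  have hψXc : Continuous fun x => ψ (X t x) := hψ.comp (hX.continuous_apply hb t)
  have hφc : Continuous fun x => (ψ (X t x) - ψ x) * w x := (hψXc.sub hψ).mul hw
  have hφp : ZdPeriodic fun x => (ψ (X t x) - ψ x) * w x :=
    (hψXp.comp₂ (· - ·) hψp).comp₂ (· * ·) hwp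
  obtain ⟨M, hM⟩ := hψp.exists_norm_le hψ
  have hdefect : ∀ S, 0 < S → S * |∫ x, (ψ (X t x) - ψ x) * w x ∂ν| ≤ 2 * M * |t| :=
    fun S hS => by
      rw [← abs_of_pos hS, ← abs_mul, ← Real.norm_eq_abs,
        ← hν.integral_intervalIntegral hYc hφc hφp hS.le]
      simpa using norm_integral_le_of_norm_le_const (μ := ν) (ae_of_all _ fun x =>
        (Real.norm_eq_abs _).trans_le (hX.abs_intervalIntegral_sub_mul_le hb hw
          (hwp.isCompact_range hw).isBounded hY hψ hM t S x))
  have hzero := abs_nonpos_iff.1 (nonpos_of_forall_pos_mul_le hdefect)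
  simp_rw [sub_mul] at hzero
  rwa [integral_sub ((hψXp.comp₂ (· * ·) hwp).integrable (hψXc.mul hw) ν)
    ((hψp.comp₂ (· * ·) hwp).integrable (hψ.mul hw) ν), sub_eq_zero] at hzero

end FlowInvariant

section Tilted

variable {d : ℕ} {w : (Fin d → ℝ) → ℝ} {ν : Measure (Fin d → ℝ)}

theorem integral_tilted_log {E : Type*} [NormedAddCommGroup E] [NormedSpace ℝ E]
    (hwpos : ∀ x, 0 < w x) (g : (Fin d → ℝ) → E) :
    ∫ x, g x ∂ν.tilted (fun x => Real.log (w x)) = (∫ x, w x ∂ν)⁻¹ • ∫ x, w x • g x ∂ν := by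
  simp_rw [integral_tilted, Real.exp_log (hwpos _), div_eq_inv_mul, mul_smul]
  exact integral_smul _ _

theorem isProbabilityMeasure_tilted_log [IsProbabilityMeasure ν] (hw : Continuous w)
    (hwp : ZdPeriodic w) (hwpos : ∀ x, 0 < w x) :
    IsProbabilityMeasure (ν.tilted fun x => Real.log (w x)) :=
  isProbabilityMeasure_tilted <| (hwp.integrable hw ν).congr <|
    ae_of_all _ fun x => (Real.exp_log (hwpos x)).symm

theorem FlowInvariant.tilted_log {b : (Fin d → ℝ) → (Fin d → ℝ)}
    {X Y : ℝ → (Fin d → ℝ) → (Fin d → ℝ)} {K : ℝ≥0} (hb : LipschitzWith K b)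
    (hbp : ZdPeriodic b) (hX : IsFlowOf b X) (hw : Continuous w) (hwp : ZdPeriodic w)
    (hwpos : ∀ x, 0 < w x) (hY : IsFlowOf (fun x => w x • b x) Y)
    (hYc : Continuous fun p : ℝ × (Fin d → ℝ) => Y p.1 p.2) [IsProbabilityMeasure ν]
    (hν : FlowInvariant Y ν) : FlowInvariant X (ν.tilted fun x => Real.log (w x)) := by
  intro t ψ hψ hψp
  simp_rw [integral_tilted_log hwpos, smul_eq_mul, mul_comm (w _)]
  rw [hν.integral_comp_mul_eq hb hbp hX hw hwp hY hYc hψ hψp]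

end Tilted

theorem inv_integral_div_smul_mem_rotationSet {d : ℕ} {Φ : (Fin d → ℝ) → (Fin d → ℝ)}
    (hΦ : ContDiff ℝ 1 Φ) (hΦp : ZdPeriodic Φ) {ρa ρb : (Fin d → ℝ) → ℝ}
    (hρa : ContDiff ℝ 1 ρa) (hρap : ZdPeriodic ρa) (hρapos : ∀ y, 0 < ρa y)
    (hρb : ContDiff ℝ 1 ρb) (hρbp : ZdPeriodic ρb) (hρbpos : ∀ y, 0 < ρb y)
    {Xa Xb : ℝ → (Fin d → ℝ) → (Fin d → ℝ)} (hXa : IsFlowOf (fun y => ρa y • Φ y) Xa)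
    (hXb : IsFlowOf (fun y => ρb y • Φ y) Xb) {ν : Measure (Fin d → ℝ)}
    (hν : IsProbabilityMeasure ν) (hνc : ν (unitCube d)ᶜ = 0) (hνX : FlowInvariant Xa ν) :
    (∫ y, ρa y / ρb y ∂ν)⁻¹ • ∫ y, ρa y • Φ y ∂ν ∈ rotationSet (fun y => ρb y • Φ y) Xb := by
  have hwc : Continuous fun y => ρa y / ρb y :=
    hρa.continuous.div hρb.continuous fun y => (hρbpos y).ne'
  have hwp : ZdPeriodic fun y => ρa y / ρb y := hρap.comp₂ (· / ·) hρbp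
  have hwpos : ∀ y, 0 < ρa y / ρb y := fun y => div_pos (hρapos y) (hρbpos y)
  have hsmul : ∀ y, (ρa y / ρb y) • ρb y • Φ y = ρa y • Φ y := fun y => by
    rw [smul_smul, div_mul_cancel₀ _ (hρbpos y).ne']
  have hbap : ZdPeriodic fun y => ρa y • Φ y := hρap.comp₂ (· • ·) hΦp
  have hbbp : ZdPeriodic fun y => ρb y • Φ y := hρbp.comp₂ (· • ·) hΦp
  obtain ⟨Ka, hKa⟩ := hbap.exists_lipschitzWith (hρa.smul hΦ)
  obtain ⟨Kb, hKb⟩ := hbbp.exists_lipschitzWith (hρb.smul hΦ)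
  have hXac := hXa.continuous_uncurry hKa (hbap.isCompact_range (hρa.continuous.smul
    hΦ.continuous)).isBounded
  rw [← funext hsmul] at hXa
  refine ⟨_, isProbabilityMeasure_tilted_log hwc hwp hwpos, tilted_absolutelyContinuous ν _ hνc,
    hνX.tilted_log hKb hbbp hXb hwc hwp hwpos hXa hXac, ?_⟩
  simp_rw [integral_tilted_log hwpos, hsmul]

theorem tendsto_integral_div_of_tendstoUniformly {α : Type*} [MeasurableSpace α]
    {μ : Measure α} [IsProbabilityMeasure μ] {f : ℕ → α → ℝ} {g : α → ℝ}
    (hf : ∀ n, Measurable (f n)) (hg : Measurable g) {c : ℝ} (hc : 0 < c) (hgc : ∀ x, c ≤ g x)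
    (hfg : TendstoUniformly f g atTop) :
    Tendsto (fun n => ∫ x, g x / f n x ∂μ) atTop (𝓝 1) := by
  have hgpos : ∀ x, 0 < g x := fun x => hc.trans_le (hgc x)
  have hbound : ∀ᶠ n in atTop, ∀ᵐ x ∂μ, ‖g x / f n x‖ ≤ 2 := by
    filter_upwards [Metric.tendstoUniformly_iff.1 hfg (c / 2) (half_pos hc)] with n hn
    refine ae_of_all _ fun x => ?_
    have hclose := hn x
    rw [Real.dist_eq, abs_lt] at hclose
    have hfx : g x / 2 < f n x := by linarith [hgc x]
    rw [Real.norm_eq_abs, abs_div, abs_of_pos (hgpos x), abs_of_pos (by linarith [hgpos x]),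
      div_le_iff₀ (by linarith [hgpos x])]
    linarith
  have hlim : ∀ x, Tendsto (fun n => g x / f n x) atTop (𝓝 1) := fun x =>
    div_self (hgpos x).ne' ▸ tendsto_const_nhds.div (hfg.tendsto_at x) (hgpos x).ne'
  simpa using tendsto_integral_filter_of_dominated_convergence (fun _ => 2)
    (Eventually.of_forall fun n => (hg.div (hf n)).aestronglyMeasurable) hbound
    (integrable_const 2) (ae_of_all _ hlim)

theorem singleton_rotationSet_closed_under_uniform_limits_general {d : ℕ}
    (Φ : (Fin d → ℝ) → (Fin d → ℝ)) (hΦ : ContDiff ℝ 1 Φ) (hΦper : ZdPeriodic Φ)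
    (ρn : ℕ → (Fin d → ℝ) → ℝ)
    (hρn : ∀ n, ContDiff ℝ 1 (ρn n)) (hρnper : ∀ n, ZdPeriodic (ρn n))
    (hρnpos : ∀ n y, 0 < ρn n y)
    (Xn : ℕ → ℝ → (Fin d → ℝ) → (Fin d → ℝ))
    (hXn : ∀ n, IsFlowOf (fun y => ρn n y • Φ y) (Xn n))
    (hsin : ∀ n, ∃ ζ : Fin d → ℝ, rotationSet (fun y => ρn n y • Φ y) (Xn n) = {ζ})
    (ρ : (Fin d → ℝ) → ℝ) (hρ : ContDiff ℝ 1 ρ) (hρper : ZdPeriodic ρ) (hρpos : ∀ y, 0 < ρ y)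
    (hunif : TendstoUniformly ρn ρ atTop)
    (X : ℝ → (Fin d → ℝ) → (Fin d → ℝ)) (hX : IsFlowOf (fun y => ρ y • Φ y) X) :
    ∃ ζ : Fin d → ℝ, rotationSet (fun y => ρ y • Φ y) X = {ζ} := by
  choose ζ hζ using hsin
  obtain ⟨c, hc, hρc⟩ := hρper.exists_pos_le hρ.continuous hρpos
  have hlim : ∀ ν, IsProbabilityMeasure ν → ν (unitCube d)ᶜ = 0 → FlowInvariant X ν →
      Tendsto ζ atTop (𝓝 (∫ y, ρ y • Φ y ∂ν)) := fun ν hν hνc hνX => by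
    have hζn : ∀ n, (∫ y, ρ y / ρn n y ∂ν)⁻¹ • ∫ y, ρ y • Φ y ∂ν = ζ n := fun n => by
      simpa [hζ n] using inv_integral_div_smul_mem_rotationSet hΦ hΦper hρ hρper hρpos
        (hρn n) (hρnper n) (hρnpos n) hX (hXn n) hν hνc hνX
    have hZ := tendsto_integral_div_of_tendstoUniformly (μ := ν)
      (fun n => (hρn n).continuous.measurable) hρ.continuous.measurable hc hρc hunif
    simpa [hζn] using (hZ.inv₀ one_ne_zero).smul_const (∫ y, ρ y • Φ y ∂ν)
  refine exists_eq_singleton_iff_nonempty_subsingleton.2 ⟨?_, ?_⟩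
  · obtain ⟨ν, hν, hνc, hνX, -⟩ : ζ 0 ∈ rotationSet _ (Xn 0) := by
      rw [hζ 0]; exact mem_singleton _
    exact ⟨_, inv_integral_div_smul_mem_rotationSet hΦ hΦper (hρn 0) (hρnper 0) (hρnpos 0)
      hρ hρper hρpos (hXn 0) hX hν hνc hνX⟩
  · rintro _ ⟨ν, hν, hνc, hνX, rfl⟩ _ ⟨ν', hν', hν'c, hν'X, rfl⟩
    exact tendsto_nhds_unique (hlim ν hν hνc hνX) (hlim ν' hν' hν'c hν'X)

/-- For a nowhere-vanishing `Φ ∈ C¹_♯(Y_d)^d`, the set of everywhere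
positive `ρ ∈ C¹_♯(Y_d)` such that `C_{ρΦ}` is a singleton is closed (for the uniform
convergence topology) in the set of everywhere positive functions of `C¹_♯(Y_d)`: if each
`C_{ρ_n Φ}` is a singleton and `ρ_n → ρ` uniformly with `ρ` positive, then `C_{ρΦ}` is a
singleton. -/
theorem singleton_rotationSet_closed_under_uniform_limits {d : ℕ} (hd : 1 ≤ d)
    (Φ : (Fin d → ℝ) → (Fin d → ℝ)) (hΦ : ContDiff ℝ 1 Φ) (hΦper : ZdPeriodic Φ)
    (hΦne : ∀ y, Φ y ≠ 0)
    (ρn : ℕ → (Fin d → ℝ) → ℝ)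
    (hρn : ∀ n, ContDiff ℝ 1 (ρn n)) (hρnper : ∀ n, ZdPeriodic (ρn n))
    (hρnpos : ∀ n y, 0 < ρn n y)
    (Xn : ℕ → ℝ → (Fin d → ℝ) → (Fin d → ℝ))
    (hXn : ∀ n, IsFlowOf (fun y => ρn n y • Φ y) (Xn n))
    (hsin : ∀ n, ∃ ζ : Fin d → ℝ, rotationSet (fun y => ρn n y • Φ y) (Xn n) = {ζ})
    (ρ : (Fin d → ℝ) → ℝ) (hρ : ContDiff ℝ 1 ρ) (hρper : ZdPeriodic ρ) (hρpos : ∀ y, 0 < ρ y)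
    (hunif : TendstoUniformly ρn ρ atTop)
    (X : ℝ → (Fin d → ℝ) → (Fin d → ℝ)) (hX : IsFlowOf (fun y => ρ y • Φ y) X) :
    ∃ ζ : Fin d → ℝ, rotationSet (fun y => ρ y • Φ y) X = {ζ} :=
  singleton_rotationSet_closed_under_uniform_limits_general Φ hΦ hΦper ρn hρn hρnper hρnpos Xn hXn
    hsin ρ hρ hρper hρpos hunif X hX
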